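/- arXiv:2505.09842 — 8 statements merged into one kernel-verified Lean document; each statement's English description precedes it below -/
import Mathlib

section
/- Let v be a valuation on a superring R. Then (A_v, 𝔭_v) is a valuation pair of R: A_v = {x ∈ R : v(x) ≥ 0} is a subsuperring of R, 𝔭_v = {x ∈ R : v(x) > 0} is a prime ideal of A_v containing 𝔍_R, and for every x ∈ R with x ∉ A_v there exists x' ∈ 𝔭_v ∩ R₀ such that x·x' ∈ A_v ∖ 𝔭_v (equivalently v(x·x') = 0). -/
universe u

/-- A superring: a `ZMod 2`-graded ring `R = R₀ ⊕ R₁` which is supercommutative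
(`R₀` is central and every odd element squares to zero). -/
structure IsSuperring {R : Type*} [Ring R] (𝒜 : ZMod 2 → AddSubgroup R) : Prop where
  one_mem : (1 : R) ∈ 𝒜 0
  mul_mem : ∀ {i j : ZMod 2} {x y : R}, x ∈ 𝒜 i → y ∈ 𝒜 j → x * y ∈ 𝒜 (i + j)
  decompose : ∀ x : R, ∃ x0 ∈ 𝒜 0, ∃ x1 ∈ 𝒜 1, x = x0 + x1
  unique_decomp : ∀ x0 ∈ 𝒜 0, ∀ x1 ∈ 𝒜 1, x0 + x1 = 0 → x0 = 0 ∧ x1 = 0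
  even_central : ∀ x ∈ 𝒜 0, ∀ y : R, x * y = y * x
  odd_sq : ∀ x ∈ 𝒜 1, x * x = 0

/-- The canonical superideal `𝔍_R = R·R₁` of a superring. -/
def canonicalSuperideal {R : Type*} [Ring R] (𝒜 : ZMod 2 → AddSubgroup R) : Set R :=
  (AddSubgroup.closure {y : R | ∃ r : R, ∃ s ∈ 𝒜 1, y = r * s} : AddSubgroup R)

/-- A (Manis) valuation on a ring `R`: a surjective map `v : R → Γ ∪ {∞}`
(`∞ = ⊤` is absorbing and greater than every element of the totally ordered
abelian group `Γ`) with `v 0 = ∞`, `v 1 = 0`, `v (x*y) = v x + v y` and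
`v (x+y) ≥ min (v x) (v y)`. -/
structure IsValuation {R : Type*} [Ring R] {Γ : Type*} [AddCommGroup Γ] [LinearOrder Γ] [IsOrderedAddMonoid Γ]
    (v : R → WithTop Γ) : Prop where
  surjective : Function.Surjective v
  map_zero : v 0 = ⊤
  map_one : v 1 = 0
  map_mul : ∀ x y : R, v (x * y) = v x + v y
  min_le_add : ∀ x y : R, min (v x) (v y) ≤ v (x + y)

/-- `A_v = {x : v x ≥ 0}`. -/
def valRing {R : Type*} [Ring R] {Γ : Type*} [AddCommGroup Γ] [LinearOrder Γ] [IsOrderedAddMonoid Γ]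
    (v : R → WithTop Γ) : Set R := {x : R | 0 ≤ v x}

/-- `𝔭_v = {x : v x > 0}`. -/
def valIdeal {R : Type*} [Ring R] {Γ : Type*} [AddCommGroup Γ] [LinearOrder Γ] [IsOrderedAddMonoid Γ]
    (v : R → WithTop Γ) : Set R := {x : R | 0 < v x}

/-- `supp v = v⁻¹(∞)`. -/
def valSupp {R : Type*} [Ring R] {Γ : Type*} [AddCommGroup Γ] [LinearOrder Γ] [IsOrderedAddMonoid Γ]
    (v : R → WithTop Γ) : Set R := {x : R | v x = ⊤}

/-- A set is `ℤ₂`-graded (a "superset"): every element decomposes into an even and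
an odd homogeneous component, both belonging to the set. -/
def IsGradedSet {R : Type*} [Ring R] (𝒜 : ZMod 2 → AddSubgroup R) (I : Set R) : Prop :=
  ∀ x ∈ I, ∃ x0 ∈ 𝒜 0, ∃ x1 ∈ 𝒜 1, x0 ∈ I ∧ x1 ∈ I ∧ x = x0 + x1

/-- A subring of `R` (same identity), as a set. -/
structure IsSubringSet {R : Type*} [Ring R] (A : Set R) : Prop where
  zero_mem : (0 : R) ∈ A
  one_mem : (1 : R) ∈ A
  add_mem : ∀ {x y : R}, x ∈ A → y ∈ A → x + y ∈ A
  neg_mem : ∀ {x : R}, x ∈ A → -x ∈ A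
  mul_mem : ∀ {x y : R}, x ∈ A → y ∈ A → x * y ∈ A

/-- A prime ideal `p` of a subring `A` of `R`: an ideal of `A` such that `A/p` is
an integral domain. -/
structure IsPrimeIdealOf {R : Type*} [Ring R] (A p : Set R) : Prop where
  subset : p ⊆ A
  zero_mem : (0 : R) ∈ p
  add_mem : ∀ {x y : R}, x ∈ p → y ∈ p → x + y ∈ p
  neg_mem : ∀ {x : R}, x ∈ p → -x ∈ p
  mul_mem_left : ∀ {a x : R}, a ∈ A → x ∈ p → a * x ∈ p
  mul_mem_right : ∀ {x a : R}, x ∈ p → a ∈ A → x * a ∈ p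
  one_not_mem : (1 : R) ∉ p
  comm_mem : ∀ {x y : R}, x ∈ A → y ∈ A → x * y - y * x ∈ p
  mem_or_mem : ∀ {x y : R}, x ∈ A → y ∈ A → x * y ∈ p → x ∈ p ∨ y ∈ p

/-- A valuation pair `(A, p)` of a superring `R`: `A` is a subsuperring, `p` is a
prime ideal of `A` containing the canonical superideal `𝔍_R`, and for every
`x ∈ R ∖ A` there is `x' ∈ p ∩ R₀` with `x·x' ∈ A ∖ p`. -/
structure IsValuationPair {R : Type*} [Ring R] (𝒜 : ZMod 2 → AddSubgroup R)
    (A p : Set R) : Prop where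
  subring : IsSubringSet A
  graded : IsGradedSet 𝒜 A
  prime : IsPrimeIdealOf A p
  canonical_subset : canonicalSuperideal 𝒜 ⊆ p
  pair : ∀ x : R, x ∉ A → ∃ x' : R, x' ∈ p ∧ x' ∈ 𝒜 0 ∧ x * x' ∈ A ∧ x * x' ∉ p

/-!
Since odd elements square to zero, a valuation takes the value `∞` on `R₁`, hence on all of
`𝔍_R = R·R₁`. So `v x = v x₀` for the even part `x₀` of `x`: this makes `A_v` graded, puts the
commutators `x y - y x ∈ 𝔍_R` into `𝔭_v`, and lets the surjectivity of `v` be realised by even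
elements, which supply the witness `x'` with `v x' = -v x`.
-/

namespace IsValuation

variable {R : Type*} [Ring R] {Γ : Type*} [AddCommGroup Γ] [LinearOrder Γ]
  [IsOrderedAddMonoid Γ] {v : R → WithTop Γ}

theorem map_neg_one (hv : IsValuation v) : v (-1) = 0 := by
  have h : v (-1) + v (-1) = 0 := by rw [← hv.map_mul, neg_one_mul, neg_neg, hv.map_one]
  have hne : v (-1) ≠ ⊤ := fun htop => by simp [htop] at h
  obtain ⟨g, hg⟩ := WithTop.ne_top_iff_exists.1 hne
  rw [← hg] at h ⊢
  have h2g : 2 • g = 0 := by rw [two_nsmul]; exact_mod_cast h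
  exact_mod_cast (nsmul_eq_zero_iff.1 h2g).resolve_right two_ne_zero

theorem map_neg (hv : IsValuation v) (x : R) : v (-x) = v x := by
  rw [← neg_one_mul, hv.map_mul, hv.map_neg_one, zero_add]

theorem map_eq_top_of_mul_self_eq_zero (hv : IsValuation v) {x : R} (hx : x * x = 0) :
    v x = ⊤ := by
  have h := hv.map_mul x x
  rw [hx, hv.map_zero] at h
  exact (WithTop.add_eq_top.1 h.symm).elim id id

theorem map_add_of_right_eq_top (hv : IsValuation v) (x : R) {y : R} (hy : v y = ⊤) :
    v (x + y) = v x := by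
  apply le_antisymm
  · calc v (x + y) = min (v (x + y)) (v (-y)) := by rw [hv.map_neg, hy, min_top_right]
      _ ≤ v (x + y + -y) := hv.min_le_add _ _
      _ = v x := by rw [add_neg_cancel_right]
  · calc v x = min (v x) (v y) := by rw [hy, min_top_right]
      _ ≤ v (x + y) := hv.min_le_add _ _

def supp (hv : IsValuation v) : AddSubgroup R where
  carrier := valSupp v
  zero_mem' := hv.map_zero
  add_mem' {x y} _ hy := (hv.map_add_of_right_eq_top x hy).trans ‹v x = ⊤›
  neg_mem' {x} hx := (hv.map_neg x).trans hx

end IsValuation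

section ValuationSets

variable {R : Type*} [Ring R] {Γ : Type*} [AddCommGroup Γ] [LinearOrder Γ]
  [IsOrderedAddMonoid Γ] {v : R → WithTop Γ}

theorem valSupp_subset_valIdeal : valSupp v ⊆ valIdeal v :=
  fun x (hx : v x = ⊤) => show 0 < v x from hx ▸ WithTop.top_pos

theorem valIdeal_subset_valRing : valIdeal v ⊆ valRing v :=
  fun x (hx : 0 < v x) => show 0 ≤ v x from hx.le

theorem isSubringSet_valRing (hv : IsValuation v) : IsSubringSet (valRing v) where
  zero_mem := show 0 ≤ v 0 by rw [hv.map_zero]; exact le_top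
  one_mem := hv.map_one.ge
  add_mem hx hy := (le_min hx hy).trans (hv.min_le_add _ _)
  neg_mem {x} hx := show 0 ≤ v (-x) by rw [hv.map_neg]; exact hx
  mul_mem {x y} hx hy := show 0 ≤ v (x * y) by rw [hv.map_mul]; exact add_nonneg hx hy

end ValuationSets

namespace IsSuperring

variable {R : Type*} [Ring R] {𝒜 : ZMod 2 → AddSubgroup R}

theorem mul_mem_canonicalSuperideal (r : R) {s : R} (hs : s ∈ 𝒜 1) :
    r * s ∈ canonicalSuperideal 𝒜 :=
  AddSubgroup.subset_closure ⟨r, s, hs, rfl⟩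

theorem commutator_mem_canonicalSuperideal (hR : IsSuperring 𝒜) (x y : R) :
    x * y - y * x ∈ canonicalSuperideal 𝒜 := by
  obtain ⟨x₀, hx₀, x₁, hx₁, rfl⟩ := hR.decompose x
  obtain ⟨y₀, hy₀, y₁, hy₁, rfl⟩ := hR.decompose y
  have h : (x₀ + x₁) * (y₀ + y₁) - (y₀ + y₁) * (x₀ + x₁) = x₁ * y₁ - y₁ * x₁ := by
    simp only [add_mul, mul_add]
    rw [hR.even_central x₀ hx₀ y₀, hR.even_central x₀ hx₀ y₁, hR.even_central y₀ hy₀ x₁]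
    abel
  rw [h]
  exact (AddSubgroup.closure _).sub_mem (mul_mem_canonicalSuperideal x₁ hy₁)
    (mul_mem_canonicalSuperideal y₁ hx₁)

end IsSuperring

section SuperringValuation

variable {R : Type*} [Ring R] {𝒜 : ZMod 2 → AddSubgroup R} {Γ : Type*} [AddCommGroup Γ]
  [LinearOrder Γ] [IsOrderedAddMonoid Γ] {v : R → WithTop Γ}

theorem IsValuation.map_eq_top_of_mem_odd (hR : IsSuperring 𝒜) (hv : IsValuation v) {x : R}
    (hx : x ∈ 𝒜 1) : v x = ⊤ :=
  hv.map_eq_top_of_mul_self_eq_zero (hR.odd_sq x hx)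

theorem IsValuation.map_add_odd (hR : IsSuperring 𝒜) (hv : IsValuation v) (x₀ : R) {x₁ : R}
    (hx₁ : x₁ ∈ 𝒜 1) : v (x₀ + x₁) = v x₀ :=
  hv.map_add_of_right_eq_top x₀ (hv.map_eq_top_of_mem_odd hR hx₁)

theorem IsValuation.exists_mem_even_map_eq (hR : IsSuperring 𝒜) (hv : IsValuation v)
    (γ : WithTop Γ) : ∃ y ∈ 𝒜 0, v y = γ := by
  obtain ⟨y, rfl⟩ := hv.surjective γ
  obtain ⟨y₀, hy₀, y₁, hy₁, rfl⟩ := hR.decompose y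
  exact ⟨y₀, hy₀, (hv.map_add_odd hR y₀ hy₁).symm⟩

theorem canonicalSuperideal_subset_valSupp (hR : IsSuperring 𝒜) (hv : IsValuation v) :
    canonicalSuperideal 𝒜 ⊆ valSupp v :=
  (AddSubgroup.closure_le hv.supp).2 fun _ ⟨r, s, hs, hy⟩ => show v _ = ⊤ by
    rw [hy, hv.map_mul, hv.map_eq_top_of_mem_odd hR hs, WithTop.add_top]

theorem isGradedSet_valRing (hR : IsSuperring 𝒜) (hv : IsValuation v) :
    IsGradedSet 𝒜 (valRing v) := by
  intro x hx
  obtain ⟨x₀, hx₀, x₁, hx₁, rfl⟩ := hR.decompose x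
  refine ⟨x₀, hx₀, x₁, hx₁, ?_, ?_, rfl⟩
  · exact show 0 ≤ v x₀ from hv.map_add_odd hR x₀ hx₁ ▸ hx
  · exact show 0 ≤ v x₁ by rw [hv.map_eq_top_of_mem_odd hR hx₁]; exact le_top

theorem isPrimeIdealOf_valIdeal (hR : IsSuperring 𝒜) (hv : IsValuation v) :
    IsPrimeIdealOf (valRing v) (valIdeal v) where
  subset := valIdeal_subset_valRing
  zero_mem := valSupp_subset_valIdeal hv.map_zero
  add_mem hx hy := (lt_min hx hy).trans_le (hv.min_le_add _ _)
  neg_mem {x} hx := show 0 < v (-x) by rw [hv.map_neg]; exact hx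
  mul_mem_left {a x} ha hx := show 0 < v (a * x) by
    rw [hv.map_mul]; exact hx.trans_le (le_add_of_nonneg_left ha)
  mul_mem_right {x a} hx ha := show 0 < v (x * a) by
    rw [hv.map_mul]; exact hx.trans_le (le_add_of_nonneg_right ha)
  one_not_mem := show ¬ 0 < v 1 by rw [hv.map_one]; exact lt_irrefl 0
  comm_mem {x y} _ _ := valSupp_subset_valIdeal <|
    canonicalSuperideal_subset_valSupp hR hv (hR.commutator_mem_canonicalSuperideal x y)
  mem_or_mem {x y} _ _ hxy := by
    by_contra! h
    have hx : v x ≤ 0 := not_lt.1 h.1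
    have hy : v y ≤ 0 := not_lt.1 h.2
    exact (show 0 < v (x * y) from hxy).not_ge (hv.map_mul x y ▸ add_nonpos hx hy)

theorem exists_mem_valIdeal_even_mul_map_eq_zero (hR : IsSuperring 𝒜) (hv : IsValuation v)
    {x : R} (hx : x ∉ valRing v) : ∃ x' ∈ valIdeal v, x' ∈ 𝒜 0 ∧ v (x * x') = 0 := by
  have hlt : v x < 0 := not_le.1 hx
  obtain ⟨g, hg⟩ := WithTop.ne_top_iff_exists.1 hlt.ne_top
  obtain ⟨y, hy₀, hy⟩ := hv.exists_mem_even_map_eq hR ((-g : Γ) : WithTop Γ)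
  refine ⟨y, show 0 < v y from ?_, hy₀, ?_⟩
  · rw [← hg] at hlt
    rw [hy]
    exact_mod_cast neg_pos.2 (WithTop.coe_lt_coe.1 hlt)
  · rw [hv.map_mul, ← hg, hy, ← WithTop.coe_add, add_neg_cancel, WithTop.coe_zero]

end SuperringValuation

theorem valuation_valuationPair_general {R : Type u} [Ring R]
    (𝒜 : ZMod 2 → AddSubgroup R) (hR : IsSuperring 𝒜)
    {Γ : Type*} [AddCommGroup Γ] [LinearOrder Γ] [IsOrderedAddMonoid Γ]
    (v : R → WithTop Γ) (hv : IsValuation v) :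
    IsValuationPair 𝒜 (valRing v) (valIdeal v) :=
  { subring := isSubringSet_valRing hv
    graded := isGradedSet_valRing hR hv
    prime := isPrimeIdealOf_valIdeal hR hv
    canonical_subset :=
      (canonicalSuperideal_subset_valSupp hR hv).trans valSupp_subset_valIdeal
    pair := fun x hx => by
      obtain ⟨x', hx'p, hx'0, hxx'⟩ := exists_mem_valIdeal_even_mul_map_eq_zero hR hv hx
      exact ⟨x', hx'p, hx'0, hxx'.ge, fun h => (show 0 < v (x * x') from h).ne' hxx'⟩ }

/-- For any valuation `v` on a superring `R`, the pair `(A_v, 𝔭_v)` is a valuation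
pair of `R`: `A_v` is a subsuperring, `𝔭_v` is a prime ideal of `A_v` containing
`𝔍_R`, and for every `x ∉ A_v` there is `x' ∈ 𝔭_v ∩ R₀` with `x·x' ∈ A_v ∖ 𝔭_v`. -/
theorem valuation_valuationPair {R : Type u} [Ring R] [Nontrivial R]
    (𝒜 : ZMod 2 → AddSubgroup R) (hR : IsSuperring 𝒜)
    {Γ : Type*} [AddCommGroup Γ] [LinearOrder Γ] [IsOrderedAddMonoid Γ]
    (v : R → WithTop Γ) (hv : IsValuation v) :
    IsValuationPair 𝒜 (valRing v) (valIdeal v) :=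
  valuation_valuationPair_general 𝒜 hR v hv
end

section
/- Let R be a superring and let 𝒞 be the collection of pairs (A, 𝔭) where A is a subsuperring of R and 𝔭 is a prime ideal of A containing 𝔍_R, partially ordered by (A, 𝔭) ≼ (B, 𝔮) iff A ⊆ B and 𝔭 = A ∩ 𝔮. Then a pair (A, 𝔭) ∈ 𝒞 is a valuation pair of R if and only if it is a maximal element of (𝒞, ≼). -/
universe u

set_option linter.unusedSectionVars false

namespace SuperProofAux

open Polynomial

variable {R : Type u} [Ring R]

theorem sum_mem_set {A : Set R} (h0 : (0:R) ∈ A)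
    (hadd : ∀ {u v : R}, u ∈ A → v ∈ A → u + v ∈ A)
    {ι : Type*} (s : Finset ι) (g : ι → R) (hg : ∀ i ∈ s, g i ∈ A) :
    (∑ i ∈ s, g i) ∈ A :=
  Finset.sum_induction g (· ∈ A) (fun _ _ ha hb => hadd ha hb) h0 hg

theorem pow_mem_set {A : Set R} (hA : IsSubringSet A) {a : R} (ha : a ∈ A) :
    ∀ n : ℕ, a ^ n ∈ A
  | 0 => by rw [pow_zero]; exact hA.one_mem
  | n+1 => by rw [pow_succ]; exact hA.mul_mem (pow_mem_set hA ha n) ha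

theorem central_pow {a : R} (h : ∀ t : R, a * t = t * a) :
    ∀ (k : ℕ) (t : R), a ^ k * t = t * a ^ k
  | 0, t => by rw [pow_zero, one_mul, mul_one]
  | k+1, t => by
      rw [pow_succ, mul_assoc, h t, ← mul_assoc, central_pow h k t, mul_assoc]

theorem eval_mul_central {y : R} (hy : ∀ t : R, y * t = t * y) (f g : R[X]) :
    (f * g).eval y = f.eval y * g.eval y :=
  Polynomial.eval₂_mul_noncomm (RingHom.id R) y (fun k => (hy (g.coeff k)).symm)

section Super
variable {𝒜 : ZMod 2 → AddSubgroup R} (hR : IsSuperring 𝒜)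
include hR

theorem even_mul_even {x y : R} (hx : x ∈ 𝒜 0) (hy : y ∈ 𝒜 0) : x * y ∈ 𝒜 0 := by
  have h : ((0 : ZMod 2) + 0) = 0 := by decide
  exact h ▸ hR.mul_mem hx hy

theorem even_mul_odd {x y : R} (hx : x ∈ 𝒜 0) (hy : y ∈ 𝒜 1) : x * y ∈ 𝒜 1 := by
  have h : ((0 : ZMod 2) + 1) = 1 := by decide
  exact h ▸ hR.mul_mem hx hy

theorem odd_mul_even {x y : R} (hx : x ∈ 𝒜 1) (hy : y ∈ 𝒜 0) : x * y ∈ 𝒜 1 := by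
  have h : ((1 : ZMod 2) + 0) = 1 := by decide
  exact h ▸ hR.mul_mem hx hy

theorem pow_even {x : R} (hx : x ∈ 𝒜 0) (n : ℕ) : x ^ n ∈ 𝒜 0 := by
  induction n with
  | zero => rw [pow_zero]; exact hR.one_mem
  | succ n ih => rw [pow_succ]; exact even_mul_even hR ih hx

theorem odd_mem_canonical {s : R} (hs : s ∈ 𝒜 1) : s ∈ canonicalSuperideal 𝒜 :=
  AddSubgroup.subset_closure ⟨1, s, hs, (one_mul s).symm⟩

theorem mul_odd_mem_canonical (r : R) {s : R} (hs : s ∈ 𝒜 1) :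
    r * s ∈ canonicalSuperideal 𝒜 :=
  AddSubgroup.subset_closure ⟨r, s, hs, rfl⟩

theorem commutator_mem_canonical (x y : R) :
    x * y - y * x ∈ canonicalSuperideal 𝒜 := by
  obtain ⟨x0, hx0, x1, hx1, rfl⟩ := hR.decompose x
  obtain ⟨y0, hy0, y1, hy1, rfl⟩ := hR.decompose y
  have e : (x0 + x1) * (y0 + y1) - (y0 + y1) * (x0 + x1)
      = (x0 * y0 - y0 * x0) + (x0 * y1 - y1 * x0) + (x1 * y0 - y0 * x1)
        + (x1 * y1 - y1 * x1) := by noncomm_ring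
  rw [e, hR.even_central x0 hx0 y0, hR.even_central x0 hx0 y1,
    ← hR.even_central y0 hy0 x1]
  simp only [sub_self, add_zero, zero_add]
  exact AddSubgroup.sub_mem _ (AddSubgroup.subset_closure ⟨x1, y1, hy1, rfl⟩)
    (AddSubgroup.subset_closure ⟨y1, x1, hx1, rfl⟩)

theorem graded_of_subring {B : Set R} (hB : IsSubringSet B)
    (h1 : ∀ s ∈ 𝒜 1, s ∈ B) : IsGradedSet 𝒜 B := by
  intro x hx
  obtain ⟨x0, hx0, x1, hx1, he⟩ := hR.decompose x
  have hx1B : x1 ∈ B := h1 x1 hx1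
  have hx0B : x0 ∈ B := by
    have h := hB.add_mem hx (hB.neg_mem hx1B)
    rwa [he, add_assoc, add_neg_cancel, add_zero] at h
  exact ⟨x0, hx0, x1, hx1, hx0B, hx1B, he⟩

end Super
end SuperProofAux
namespace SuperProofAux
open Polynomial

variable {R : Type u} [Ring R]
variable {𝒜 : ZMod 2 → AddSubgroup R} (hR : IsSuperring 𝒜)
variable {A p : Set R} (hA : IsSubringSet A) (hp : IsPrimeIdealOf A p)
variable (hJ : canonicalSuperideal 𝒜 ⊆ p)
include hR hA hp hJ

/-- Key lemma: if `(A,p)` is a maximal pair then for every even `y ∉ A` there is a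
polynomial with coefficients in `p` whose value at `y` lies in `A ∖ p`. -/
theorem exists_poly_rel
    (hmax : ∀ B q : Set R, IsSubringSet B → IsGradedSet 𝒜 B → IsPrimeIdealOf B q →
      canonicalSuperideal 𝒜 ⊆ q → A ⊆ B → p = A ∩ q → A = B ∧ p = q)
    (y : R) (hy0 : y ∈ 𝒜 0) (hyA : y ∉ A) :
    ∃ g : R[X], (∀ i, g.coeff i ∈ p) ∧ g.eval y ∈ A ∧ g.eval y ∉ p := by
  classical
  by_contra hc
  push_neg at hc
  have hyc : ∀ t : R, y * t = t * y := hR.even_central y hy0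
  set B : Set R := {r | ∃ f : R[X], (∀ i, f.coeff i ∈ A) ∧ r = f.eval y} with hBdef
  set I : Set R := {r | ∃ f : R[X], (∀ i, f.coeff i ∈ p) ∧ r = f.eval y} with hIdef
  have hAB : A ⊆ B := by
    intro a ha
    refine ⟨Polynomial.C a, fun i => ?_, (eval_C).symm⟩
    rw [coeff_C]
    split
    · exact ha
    · exact hA.zero_mem
  have hpI : p ⊆ I := by
    intro a ha
    refine ⟨Polynomial.C a, fun i => ?_, (eval_C).symm⟩
    rw [coeff_C]
    split
    · exact ha
    · exact hp.zero_mem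
  have hyB : y ∈ B := by
    refine ⟨Polynomial.X, fun i => ?_, (eval_X).symm⟩
    rw [coeff_X]
    split
    · exact hA.one_mem
    · exact hA.zero_mem
  have hB : IsSubringSet B := by
    refine ⟨⟨0, fun i => by simp [hA.zero_mem], by simp⟩,
      ⟨1, fun i => ?_, by simp⟩, ?_, ?_, ?_⟩
    · rw [coeff_one]
      split
      · exact hA.one_mem
      · exact hA.zero_mem
    · rintro u v ⟨f, hf, rfl⟩ ⟨g, hg, rfl⟩
      exact ⟨f + g, fun i => by rw [coeff_add]; exact hA.add_mem (hf i) (hg i),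
        (eval_add).symm⟩
    · rintro u ⟨f, hf, rfl⟩
      exact ⟨-f, fun i => by rw [coeff_neg]; exact hA.neg_mem (hf i), (eval_neg f y).symm⟩
    · rintro u v ⟨f, hf, rfl⟩ ⟨g, hg, rfl⟩
      refine ⟨f * g, fun i => ?_, (eval_mul_central hyc f g).symm⟩
      rw [coeff_mul]
      exact sum_mem_set hA.zero_mem (fun h1 h2 => hA.add_mem h1 h2) _ _
        (fun q _ => hA.mul_mem (hf q.1) (hg q.2))
  have hIadd : ∀ {u v : R}, u ∈ I → v ∈ I → u + v ∈ I := by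
    rintro u v ⟨f, hf, rfl⟩ ⟨g, hg, rfl⟩
    exact ⟨f + g, fun i => by rw [coeff_add]; exact hp.add_mem (hf i) (hg i),
      (eval_add).symm⟩
  have hIneg : ∀ {u : R}, u ∈ I → -u ∈ I := by
    rintro u ⟨f, hf, rfl⟩
    exact ⟨-f, fun i => by rw [coeff_neg]; exact hp.neg_mem (hf i), (eval_neg f y).symm⟩
  have hIml : ∀ b ∈ B, ∀ u ∈ I, b * u ∈ I := by
    rintro b ⟨f, hf, rfl⟩ u ⟨g, hg, rfl⟩
    refine ⟨f * g, fun i => ?_, (eval_mul_central hyc f g).symm⟩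
    rw [coeff_mul]
    exact sum_mem_set hp.zero_mem (fun h1 h2 => hp.add_mem h1 h2) _ _
      (fun q _ => hp.mul_mem_left (hf q.1) (hg q.2))
  have hImr : ∀ u ∈ I, ∀ b ∈ B, u * b ∈ I := by
    rintro u ⟨f, hf, rfl⟩ b ⟨g, hg, rfl⟩
    refine ⟨f * g, fun i => ?_, (eval_mul_central hyc f g).symm⟩
    rw [coeff_mul]
    exact sum_mem_set hp.zero_mem (fun h1 h2 => hp.add_mem h1 h2) _ _
      (fun q _ => hp.mul_mem_right (hf q.1) (hg q.2))
  have hIB : I ⊆ B := by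
    rintro u ⟨f, hf, rfl⟩
    exact ⟨f, fun i => hp.subset (hf i), rfl⟩
  have hIS : ∀ u ∈ I, u ∈ A → u ∈ p := by
    rintro u ⟨f, hf, rfl⟩ huA
    exact hc f hf huA
  -- the collection for Zorn's lemma
  set 𝒮 : Set (Set R) := {q | I ⊆ q ∧ q ⊆ B ∧ (∀ u ∈ q, ∀ v ∈ q, u + v ∈ q) ∧
    (∀ u ∈ q, -u ∈ q) ∧ (∀ b ∈ B, ∀ u ∈ q, b * u ∈ q) ∧
    (∀ u ∈ q, ∀ b ∈ B, u * b ∈ q) ∧ (∀ u ∈ q, u ∈ A → u ∈ p)} with h𝒮def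
  have hI𝒮 : I ∈ 𝒮 := by
    refine ⟨le_refl _, hIB, fun u hu v hv => hIadd hu hv, fun u hu => hIneg hu,
      hIml, hImr, hIS⟩
  have hchains : ∀ c ⊆ 𝒮, IsChain (· ⊆ ·) c → c.Nonempty →
      ∃ ub ∈ 𝒮, ∀ s ∈ c, s ⊆ ub := by
    intro c hc𝒮 hchain hcne
    obtain ⟨q0, hq0⟩ := hcne
    refine ⟨⋃₀ c, ⟨?_, ?_, ?_, ?_, ?_, ?_, ?_⟩, fun s hs => Set.subset_sUnion_of_mem hs⟩
    · exact le_trans (hc𝒮 hq0).1 (Set.subset_sUnion_of_mem hq0)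
    · exact fun u ⟨q, hq, hu⟩ => (hc𝒮 hq).2.1 hu
    · rintro u ⟨q1, hq1, hu⟩ v ⟨q2, hq2, hv⟩
      rcases hchain.total hq1 hq2 with h | h
      · exact ⟨q2, hq2, (hc𝒮 hq2).2.2.1 u (h hu) v hv⟩
      · exact ⟨q1, hq1, (hc𝒮 hq1).2.2.1 u hu v (h hv)⟩
    · rintro u ⟨q1, hq1, hu⟩
      exact ⟨q1, hq1, (hc𝒮 hq1).2.2.2.1 u hu⟩
    · rintro b hb u ⟨q1, hq1, hu⟩
      exact ⟨q1, hq1, (hc𝒮 hq1).2.2.2.2.1 b hb u hu⟩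
    · rintro u ⟨q1, hq1, hu⟩ b hb
      exact ⟨q1, hq1, (hc𝒮 hq1).2.2.2.2.2.1 u hu b hb⟩
    · rintro u ⟨q1, hq1, hu⟩ huA
      exact (hc𝒮 hq1).2.2.2.2.2.2 u hu huA
  obtain ⟨M, hIM, hMmax⟩ := zorn_subset_nonempty 𝒮 hchains I hI𝒮
  obtain ⟨hIM', hMB, hMadd, hMneg, hMl, hMr, hMS⟩ := hMmax.1
  have h0M : (0 : R) ∈ M := hIM' (hpI hp.zero_mem)
  have hcommM : ∀ u v : R, u * v - v * u ∈ M :=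
    fun u v => hIM' (hpI (hJ (commutator_mem_canonical hR u v)))
  -- primality of M
  have hprime : ∀ {u v : R}, u ∈ B → v ∈ B → u * v ∈ M → u ∈ M ∨ v ∈ M := by
    intro u v hu hv huv
    by_contra hcon2
    push_neg at hcon2
    obtain ⟨huM, hvM⟩ := hcon2
    have key : ∀ w ∈ B, w ∉ M → ∃ s, (s ∈ A ∧ s ∉ p) ∧
        ∃ m ∈ M, ∃ b ∈ B, s = m + b * w := by
      intro w hw hwM
      by_cases hdis : ∀ u₀ : R, ∀ m ∈ M, ∀ b ∈ B, u₀ = m + b * w → u₀ ∈ A → u₀ ∈ p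
      · exfalso
        set N : Set R := {t | ∃ m ∈ M, ∃ b ∈ B, t = m + b * w} with hNdef
        have hMN : M ⊆ N := fun m hm =>
          ⟨m, hm, 0, hB.zero_mem, by rw [zero_mul, add_zero]⟩
        have hwN : w ∈ N := ⟨0, h0M, 1, hB.one_mem, by rw [one_mul, zero_add]⟩
        have hN𝒮 : N ∈ 𝒮 := by
          refine ⟨le_trans hIM' hMN, ?_, ?_, ?_, ?_, ?_, ?_⟩
          · rintro t ⟨m, hm, b, hb, rfl⟩
            exact hB.add_mem (hMB hm) (hB.mul_mem hb hw)
          · rintro t ⟨m, hm, b, hb, rfl⟩ t' ⟨m', hm', b', hb', rfl⟩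
            refine ⟨m + m', hMadd _ hm _ hm', b + b', hB.add_mem hb hb', by noncomm_ring⟩
          · rintro t ⟨m, hm, b, hb, rfl⟩
            refine ⟨-m, hMneg _ hm, -b, hB.neg_mem hb, by noncomm_ring⟩
          · rintro c hcB t ⟨m, hm, b, hb, rfl⟩
            refine ⟨c * m, hMl _ hcB _ hm, c * b, hB.mul_mem hcB hb, by noncomm_ring⟩
          · rintro t ⟨m, hm, b, hb, rfl⟩ c hcB
            refine ⟨m * c + b * (w * c - c * w),
              hMadd _ (hMr _ hm _ hcB) _ (hMl _ hb _ (hcommM w c)),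
              b * c, hB.mul_mem hb hcB, by noncomm_ring⟩
          · rintro t ⟨m, hm, b, hb, rfl⟩ htA
            exact hdis _ m hm b hb rfl htA
        have : N ⊆ M := hMmax.2 hN𝒮 hMN
        exact hwM (this hwN)
      · push_neg at hdis
        obtain ⟨s, m, hm, b, hb, hse, hsA, hsp⟩ := hdis
        exact ⟨s, ⟨hsA, hsp⟩, m, hm, b, hb, hse⟩
    obtain ⟨s₁, ⟨hs₁A, hs₁p⟩, m₁, hm₁, c₁, hc₁, hs₁e⟩ := key u hu huM
    obtain ⟨s₂, ⟨hs₂A, hs₂p⟩, m₂, hm₂, c₂, hc₂, hs₂e⟩ := key v hv hvM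
    have hs₁₂A : s₁ * s₂ ∈ A := hA.mul_mem hs₁A hs₂A
    have hs₁₂p : s₁ * s₂ ∉ p := fun h => (hp.mem_or_mem hs₁A hs₂A h).elim hs₁p hs₂p
    have e : s₁ * s₂ = m₁ * s₂ + (c₁ * u) * m₂ +
        ((c₁ * c₂) * (u * v) + c₁ * ((u * c₂ - c₂ * u) * v)) := by
      rw [hs₁e, hs₂e]; noncomm_ring
    have hmem : s₁ * s₂ ∈ M := by
      rw [e]
      refine hMadd _ (hMadd _ ?_ _ ?_) _ (hMadd _ ?_ _ ?_)
      · exact hMr _ hm₁ _ (hAB hs₂A)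
      · exact hMl _ (hB.mul_mem hc₁ hu) _ hm₂
      · exact hMl _ (hB.mul_mem hc₁ hc₂) _ huv
      · exact hMl _ hc₁ _ (hMr _ (hcommM u c₂) _ hv)
    exact hs₁₂p (hMS _ hmem hs₁₂A)
  have hMprime : IsPrimeIdealOf B M :=
    { subset := hMB
      zero_mem := h0M
      add_mem := fun h1 h2 => hMadd _ h1 _ h2
      neg_mem := fun h => hMneg _ h
      mul_mem_left := fun ha hx => hMl _ ha _ hx
      mul_mem_right := fun hx ha => hMr _ hx _ ha
      one_not_mem := fun h => hp.one_not_mem (hMS _ h hA.one_mem)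
      comm_mem := fun _ _ => hcommM _ _
      mem_or_mem := fun hx hy h => hprime hx hy h }
  have hBg : IsGradedSet 𝒜 B :=
    graded_of_subring hR hB (fun s hs => hAB (hp.subset (hJ (odd_mem_canonical hR hs))))
  have h𝔍M : canonicalSuperideal 𝒜 ⊆ M := fun j hj => hIM' (hpI (hJ hj))
  have hpAM : p = A ∩ M :=
    Set.Subset.antisymm (fun t ht => ⟨hp.subset ht, hIM' (hpI ht)⟩)
      (fun t ht => hMS t ht.2 ht.1)
  obtain ⟨hABeq, -⟩ := hmax B M hB hBg hMprime h𝔍M hAB hpAM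
  exact hyA (hABeq ▸ hyB)

end SuperProofAux
namespace SuperProofAux
open Polynomial

variable {R : Type u} [Ring R]
variable {𝒜 : ZMod 2 → AddSubgroup R} (hR : IsSuperring 𝒜)
variable {A p : Set R} (hA : IsSubringSet A) (hp : IsPrimeIdealOf A p)
variable (hJ : canonicalSuperideal 𝒜 ⊆ p)
include hR hA hp hJ

theorem core_pair
    (hmax : ∀ B q : Set R, IsSubringSet B → IsGradedSet 𝒜 B → IsPrimeIdealOf B q →
      canonicalSuperideal 𝒜 ⊆ q → A ⊆ B → p = A ∩ q → A = B ∧ p = q)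
    (x : R) (hx0 : x ∈ 𝒜 0) (hxA : x ∉ A) :
    ∃ x' : R, x' ∈ p ∧ x * x' ∈ A ∧ x * x' ∉ p := by
  classical
  by_contra hcon
  push_neg at hcon
  have hQ0 : ∃ n : ℕ, ∃ f : R[X], (∀ i, f.coeff i ∈ p) ∧ f.natDegree ≤ n ∧
      f.eval x ∈ A ∧ f.eval x ∉ p := by
    obtain ⟨f, h1, h2, h3⟩ := exists_poly_rel hR hA hp hJ hmax x hx0 hxA
    exact ⟨f.natDegree, f, h1, le_rfl, h2, h3⟩
  set d := Nat.find hQ0 with hd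
  obtain ⟨f₀, hf₀c, hf₀d, hf₀A, hf₀p⟩ := Nat.find_spec hQ0
  rw [← hd] at hf₀d
  have hdpos : 1 ≤ d := by
    by_contra h
    have hd0 : d = 0 := by omega
    apply hf₀p
    have hle : f₀.natDegree ≤ 0 := by omega
    rw [Polynomial.eq_C_of_natDegree_le_zero hle, eval_C]
    exact hf₀c 0
  -- evenize the top coefficient
  obtain ⟨a, haev, aodd, haodd, hadecomp⟩ := hR.decompose (f₀.coeff d)
  have hoddp : aodd ∈ p := hJ (odd_mem_canonical hR haodd)
  have hap : a ∈ p := by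
    have h : a = f₀.coeff d + -aodd := by rw [hadecomp]; abel
    rw [h]; exact hp.add_mem (hf₀c d) (hp.neg_mem hoddp)
  set f : R[X] := f₀.erase d + Polynomial.C a * Polynomial.X ^ d with hfdef
  have hfc : ∀ i, f.coeff i ∈ p := by
    intro i
    rw [hfdef, coeff_add, coeff_erase, coeff_C_mul, coeff_X_pow]
    by_cases hi : i = d
    · rw [if_pos hi, if_pos hi, mul_one, zero_add]; exact hap
    · rw [if_neg hi, if_neg hi, mul_zero, add_zero]; exact hf₀c i
  have hfd : f.natDegree ≤ d := by
    rw [natDegree_le_iff_coeff_eq_zero]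
    intro N hN
    rw [hfdef, coeff_add, coeff_erase, coeff_C_mul, coeff_X_pow,
      if_neg (by omega : ¬ N = d), if_neg (by omega : ¬ N = d), mul_zero, add_zero]
    exact natDegree_le_iff_coeff_eq_zero.mp hf₀d N hN
  have hfcd : f.coeff d = a := by
    rw [hfdef, coeff_add, coeff_erase, if_pos rfl, coeff_C_mul, coeff_X_pow, if_pos rfl,
      mul_one, zero_add]
  have hxpow : ∀ n : ℕ, x ^ n ∈ 𝒜 0 := pow_even hR hx0
  have hoddxA : aodd * x ^ d ∈ p :=
    hJ (odd_mem_canonical hR (odd_mul_even hR haodd (hxpow d)))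
  have hE : ∀ (g : R[X]) (n : ℕ),
      g.eval x = (g.erase n).eval x + g.coeff n * x ^ n := by
    intro g n
    conv_lhs => rw [← Polynomial.monomial_add_erase g n]
    rw [eval_add, eval_monomial]
    exact add_comm _ _
  have hevalf : f.eval x = (f₀.erase d).eval x + a * x ^ d := by
    rw [hfdef, eval_add, C_mul_X_pow_eq_monomial, eval_monomial]
  have hevalf₀ : f₀.eval x = (f₀.erase d).eval x + (a + aodd) * x ^ d := by
    rw [hE f₀ d, hadecomp]
  have hfeval : f.eval x = f₀.eval x - aodd * x ^ d := by
    rw [hevalf, hevalf₀]; noncomm_ring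
  have hfA : f.eval x ∈ A := by
    rw [hfeval, sub_eq_add_neg]
    exact hA.add_mem hf₀A (hA.neg_mem (hp.subset hoddxA))
  have hfp : f.eval x ∉ p := by
    intro h
    apply hf₀p
    have h2 : f₀.eval x = f.eval x + aodd * x ^ d := by rw [hfeval]; abel
    rw [h2]; exact hp.add_mem h hoddxA
  set z := a * x with hzdef
  have hz0 : z ∈ 𝒜 0 := even_mul_even hR haev hx0
  have hza : a * x = x * a := hR.even_central a haev x
  by_cases hzp : z ∈ p
  · -- the top coefficient kills x : reduce the degree, contradiction
    set g : R[X] := f.erase d + Polynomial.C z * Polynomial.X ^ (d - 1) with hgdef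
    have hgc : ∀ i, g.coeff i ∈ p := by
      intro i
      rw [hgdef, coeff_add, coeff_erase, coeff_C_mul, coeff_X_pow]
      by_cases hi : i = d
      · rw [if_pos hi, if_neg (by omega : ¬ i = d - 1), mul_zero, zero_add]
        exact hp.zero_mem
      · rw [if_neg hi]
        by_cases hi2 : i = d - 1
        · rw [if_pos hi2, mul_one]; exact hp.add_mem (hfc i) hzp
        · rw [if_neg hi2, mul_zero, add_zero]; exact hfc i
    have hgd : g.natDegree ≤ d - 1 := by
      rw [natDegree_le_iff_coeff_eq_zero]
      intro N hN
      rw [hgdef, coeff_add, coeff_erase, coeff_C_mul, coeff_X_pow,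
        if_neg (by omega : ¬ N = d - 1), mul_zero, add_zero]
      by_cases hNd : N = d
      · rw [if_pos hNd]
      · rw [if_neg hNd]
        exact natDegree_le_iff_coeff_eq_zero.mp hfd N (by omega)
    have hgeval : g.eval x = f.eval x := by
      rw [hgdef, eval_add, C_mul_X_pow_eq_monomial, eval_monomial, hE f d, hfcd]
      congr 1
      rw [hzdef, mul_assoc, ← pow_succ']
      have hdd : d - 1 + 1 = d := by omega
      rw [hdd]
    have hnot := Nat.find_min hQ0 (show d - 1 < Nat.find hQ0 by rw [← hd]; omega)
    exact hnot ⟨g, hgc, hgd, by rw [hgeval]; exact hfA, by rw [hgeval]; exact hfp⟩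
  · by_cases hzA : z ∈ A
    · -- z ∈ A ∖ p would give the valuation element, contradicting hcon
      have h1 : x * a ∈ A := by rw [← hza]; exact hzA
      have h2 : x * a ∈ p := hcon a hap h1
      rw [← hza] at h2
      exact hzp h2
    · -- z ∉ A : use the maximality lemma for z and descend
      have hd2 : 2 ≤ d := by
        by_contra h
        have hd1 : d = 1 := by omega
        apply hzA
        have h0 : (f.erase d).natDegree ≤ 0 := by
          rw [natDegree_le_iff_coeff_eq_zero]
          intro N hN
          rw [coeff_erase]
          by_cases hNd : N = d
          · rw [if_pos hNd]
          · rw [if_neg hNd]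
            exact natDegree_le_iff_coeff_eq_zero.mp hfd N (by omega)
        have hEA : (f.erase d).eval x ∈ A := by
          rw [Polynomial.eq_C_of_natDegree_le_zero h0, eval_C]
          apply hp.subset
          rw [coeff_erase, if_neg (by omega : ¬ (0:ℕ) = d)]
          exact hfc 0
        have h3 : z = f.eval x + -((f.erase d).eval x) := by
          rw [hE f d, hfcd, hd1, pow_one, hzdef]; abel
        rw [h3]
        exact hA.add_mem hfA (hA.neg_mem hEA)
      obtain ⟨g, hgc, hgA, hgp⟩ := exists_poly_rel hR hA hp hJ hmax z hz0 hzA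
      have hax : ∀ t : R, a * t = t * a := hR.even_central a haev
      have hpowz : ∀ j : ℕ, z ^ j = a ^ j * x ^ j :=
        fun j => (show Commute a x from hza).mul_pow j
      set w := a ^ (d-1) * f.eval x with hwdef
      have hapow : ∀ n, a ^ n ∈ A := pow_mem_set hA (hp.subset hap)
      have hwp : w ∈ p := by
        have h1 : a ^ (d-1) ∈ p := by
          have h2 : a ^ (d-1) = a ^ (d-2) * a := by
            rw [← pow_succ]; congr 1; omega
          rw [h2]; exact hp.mul_mem_left (hapow (d-2)) hap
        exact hp.mul_mem_right h1 hfA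
      have key : z ^ d = w - ∑ i ∈ Finset.range d, (f.coeff i * a ^ (d-1-i)) * z ^ i := by
        have he : f.eval x = ∑ i ∈ Finset.range (d+1), f.coeff i * x ^ i :=
          eval_eq_sum_range' (lt_of_le_of_lt hfd (Nat.lt_succ_self d)) x
        have hsum : ∀ i ∈ Finset.range d, (f.coeff i * a ^ (d-1-i)) * z ^ i
            = a ^ (d-1) * (f.coeff i * x ^ i) := by
          intro i hi
          have hi' : i < d := Finset.mem_range.mp hi
          rw [hpowz i]
          have h1 : a ^ (d-1-i) * (a ^ i * x ^ i) = a ^ (d-1) * x ^ i := by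
            rw [← mul_assoc, ← pow_add]
            congr 2
            omega
          rw [mul_assoc (f.coeff i), h1, ← mul_assoc,
            ← central_pow hax (d-1) (f.coeff i), mul_assoc]
        have hzd : z ^ d = a ^ (d-1) * (f.coeff d * x ^ d) := by
          rw [hpowz d, hfcd]
          rw [show a ^ d = a ^ (d-1) * a by rw [← pow_succ]; congr 1; omega]
          rw [mul_assoc]
        rw [hwdef, he, Finset.sum_range_succ, Finset.sum_congr rfl hsum, mul_add,
          Finset.mul_sum, add_sub_cancel_left]
        exact hzd
      set W : Set R := {r | ∃ h : R[X], (∀ i, h.coeff i ∈ p) ∧ h.natDegree ≤ d - 1 ∧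
        r = h.eval x} with hWdef
      have hW0 : (0:R) ∈ W :=
        ⟨0, fun i => by rw [coeff_zero]; exact hp.zero_mem, by simp, by simp⟩
      have hWadd : ∀ {u v : R}, u ∈ W → v ∈ W → u + v ∈ W := by
        rintro u v ⟨h1, hc1, hd1, rfl⟩ ⟨h2, hc2, hd2, rfl⟩
        exact ⟨h1 + h2, fun i => by rw [coeff_add]; exact hp.add_mem (hc1 i) (hc2 i),
          le_trans (natDegree_add_le h1 h2) (max_le hd1 hd2), (eval_add).symm⟩
      have hWneg : ∀ {u : R}, u ∈ W → -u ∈ W := by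
        rintro u ⟨h1, hc1, hd1, rfl⟩
        exact ⟨-h1, fun i => by rw [coeff_neg]; exact hp.neg_mem (hc1 i),
          (natDegree_neg h1).le.trans hd1, (eval_neg h1 x).symm⟩
      have hWsub : ∀ {u v : R}, u ∈ W → v ∈ W → u - v ∈ W := by
        intro u v hu hv
        rw [sub_eq_add_neg]
        exact hWadd hu (hWneg hv)
      have hWsum : ∀ {ι : Type} (s : Finset ι) (t : ι → R),
          (∀ i ∈ s, t i ∈ W) → (∑ i ∈ s, t i) ∈ W :=
        fun s t ht => sum_mem_set hW0 (fun h1 h2 => hWadd h1 h2) s t ht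
      have hpowmem : ∀ j : ℕ, ∀ c ∈ p, c * z ^ j ∈ W := by
        intro j
        induction j using Nat.strong_induction_on with
        | _ j ih =>
          intro c hc
          by_cases hj : j ≤ d - 1
          · refine ⟨Polynomial.C (c * a ^ j) * Polynomial.X ^ j, fun i => ?_,
              le_trans (natDegree_C_mul_X_pow_le _ _) hj, ?_⟩
            · rw [coeff_C_mul, coeff_X_pow]
              by_cases hij : i = j
              · rw [if_pos hij, mul_one]; exact hp.mul_mem_right hc (hapow j)
              · rw [if_neg hij, mul_zero]; exact hp.zero_mem
            · rw [C_mul_X_pow_eq_monomial, eval_monomial, hpowz j, ← mul_assoc]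
          · have hz1 : z ^ j = z ^ d * z ^ (j - d) := by
              rw [← pow_add]; congr 1; omega
            have e1 : c * z ^ j = (c * w) * z ^ (j-d) -
                ∑ i ∈ Finset.range d,
                  (c * (f.coeff i * a ^ (d-1-i))) * z ^ (i + (j-d)) := by
              rw [hz1, key, sub_mul, mul_sub, ← mul_assoc c w, Finset.sum_mul,
                Finset.mul_sum]
              congr 1
              apply Finset.sum_congr rfl
              intro i hi
              rw [pow_add]
              simp only [mul_assoc]
            rw [e1]
            refine hWsub (ih (j - d) (by omega) _ (hp.mul_mem_right hc (hp.subset hwp)))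
              (hWsum _ _ ?_)
            intro i hi
            have hi' : i < d := Finset.mem_range.mp hi
            exact ih (i + (j - d)) (by omega) _
              (hp.mul_mem_right hc (hA.mul_mem (hp.subset (hfc i)) (hapow (d-1-i))))
      have hgzW : g.eval z ∈ W := by
        rw [eval_eq_sum_range' (Nat.lt_succ_self g.natDegree) z]
        exact hWsum _ _ (fun i _ => hpowmem i _ (hgc i))
      obtain ⟨h, hhc, hhd, hhe⟩ := hgzW
      have hnot := Nat.find_min hQ0 (show d - 1 < Nat.find hQ0 by rw [← hd]; omega)
      exact hnot ⟨h, hhc, hhd, by rw [← hhe]; exact hgA, by rw [← hhe]; exact hgp⟩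

end SuperProofAux
open SuperProofAux in
/-- A pair `(A, p)` (with `A` a subsuperring of `R` and `p` a prime ideal of `A`
containing `𝔍_R`) is a valuation pair of `R` iff it is maximal in the collection
of all such pairs, ordered by `(A, p) ≼ (B, q) ↔ A ⊆ B ∧ p = A ∩ q`. -/
theorem valuationPair_iff_maximalPair {R : Type u} [Ring R] [Nontrivial R]
    (𝒜 : ZMod 2 → AddSubgroup R) (hR : IsSuperring 𝒜)
    (A p : Set R) (hA : IsSubringSet A) (hAg : IsGradedSet 𝒜 A)
    (hp : IsPrimeIdealOf A p) (hJ : canonicalSuperideal 𝒜 ⊆ p) :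
    IsValuationPair 𝒜 A p ↔
      ∀ B q : Set R, IsSubringSet B → IsGradedSet 𝒜 B → IsPrimeIdealOf B q →
        canonicalSuperideal 𝒜 ⊆ q → A ⊆ B → p = A ∩ q → A = B ∧ p = q := by
  constructor
  · -- a valuation pair is maximal
    intro hV B q hB hBg hq hJq hAB hpAq
    have hBA : B ⊆ A := by
      intro b hb
      by_contra hbA
      obtain ⟨x', hx'p, hx'0, hxA', hxp'⟩ := hV.pair b hbA
      have hx'q : x' ∈ q := by
        have h : x' ∈ A ∩ q := by rw [← hpAq]; exact hx'p
        exact h.2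
      have hbq : b * x' ∈ q := hq.mul_mem_left hb hx'q
      apply hxp'
      rw [hpAq]
      exact ⟨hxA', hbq⟩
    have hABeq : A = B := Set.Subset.antisymm hAB hBA
    refine ⟨hABeq, ?_⟩
    rw [hpAq]
    exact Set.inter_eq_self_of_subset_right (hABeq ▸ hq.subset)
  · -- a maximal pair is a valuation pair
    intro hmax
    refine ⟨hA, hAg, hp, hJ, ?_⟩
    intro x hxA
    obtain ⟨x0, hx00, x1, hx11, hxd⟩ := hR.decompose x
    have hx1p : x1 ∈ p := hJ (odd_mem_canonical hR hx11)
    have hx1A : x1 ∈ A := hp.subset hx1p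
    have hx0A : x0 ∉ A := fun h => hxA (by rw [hxd]; exact hA.add_mem h hx1A)
    obtain ⟨x', hx'p, hxxA, hxxp⟩ := core_pair hR hA hp hJ hmax x0 hx00 hx0A
    -- replace x' by its even component
    obtain ⟨u0, hu00, u1, hu11, hud⟩ := hR.decompose x'
    have hu1p : u1 ∈ p := hJ (odd_mem_canonical hR hu11)
    have hu0p : u0 ∈ p := by
      have h : u0 = x' + -u1 := by rw [hud]; abel
      rw [h]; exact hp.add_mem hx'p (hp.neg_mem hu1p)
    have hx0u1 : x0 * u1 ∈ p := hJ (odd_mem_canonical hR (even_mul_odd hR hx00 hu11))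
    have hx0u0A : x0 * u0 ∈ A := by
      have h : x0 * u0 = x0 * x' + -(x0 * u1) := by rw [hud]; noncomm_ring
      rw [h]; exact hA.add_mem hxxA (hA.neg_mem (hp.subset hx0u1))
    have hx0u0p : x0 * u0 ∉ p := by
      intro hmem
      apply hxxp
      have h : x0 * x' = x0 * u0 + x0 * u1 := by rw [hud]; noncomm_ring
      rw [h]; exact hp.add_mem hmem hx0u1
    have hx1u0 : x1 * u0 ∈ p := hp.mul_mem_right hx1p (hp.subset hu0p)
    refine ⟨u0, hu0p, hu00, ?_, ?_⟩
    · have h : x * u0 = x0 * u0 + x1 * u0 := by rw [hxd]; noncomm_ring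
      rw [h]; exact hA.add_mem hx0u0A (hp.subset hx1u0)
    · intro hmem
      apply hx0u0p
      have h : x0 * u0 = x * u0 + -(x1 * u0) := by rw [hxd]; noncomm_ring
      rw [h]; exact hp.add_mem hmem (hp.neg_mem hx1u0)
end

section
/- Let v be a valuation on a superring R. The v-convex prime ideals of A_v are exactly the prime ideals 𝔞 of A_v satisfying supp(v) ⊆ 𝔞 ⊆ 𝔭_v. -/
universe u

/-- A `v`-convex ideal: `x ∈ I` and `v y ≥ v x` imply `y ∈ I`. -/
def IsVConvex {R : Type*} [Ring R] {Γ : Type*} [AddCommGroup Γ] [LinearOrder Γ] [IsOrderedAddMonoid Γ]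
    (v : R → WithTop Γ) (I : Set R) : Prop :=
  ∀ x ∈ I, ∀ y : R, v x ≤ v y → y ∈ I

/-!
If `x ∈ 𝔞` has finite value `γ`, pick `z` with `v z = -γ`. Then `z x` has value `0`, so it lies in
`A_v` but not in `𝔞 ⊆ 𝔭_v`; and whenever `v y ≥ v x`, also `y z ∈ A_v`. Since `A_v / 𝔞` is
commutative, `(z x) y ≡ y (z x) = (y z) x ≡ 0` modulo `𝔞`, so primality forces `y ∈ 𝔞`.
Elements of infinite value are handled by `supp v ⊆ 𝔞`.
-/

section

variable {R : Type*} [Ring R] {Γ : Type*} [AddCommGroup Γ] [LinearOrder Γ] [IsOrderedAddMonoid Γ]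
  {v : R → WithTop Γ}

theorem IsVConvex.valSupp_subset (hv : IsValuation v) {I : Set R} (hI : IsVConvex v I)
    (h0 : (0 : R) ∈ I) : valSupp v ⊆ I := fun x hx =>
  hI 0 h0 x (by rw [hv.map_zero, show v x = ⊤ from hx])

theorem IsVConvex.subset_valIdeal (hv : IsValuation v) {I : Set R} (hI : IsVConvex v I)
    (hsub : I ⊆ valRing v) (h1 : (1 : R) ∉ I) : I ⊆ valIdeal v := by
  intro x hx
  refine lt_of_le_of_ne (show 0 ≤ v x from hsub hx) fun h => h1 (hI x hx 1 ?_)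
  rw [hv.map_one, h]

theorem IsPrimeIdealOf.mul_mem_of_mul_mem_swap {A p : Set R} (hp : IsPrimeIdealOf A p)
    {x y : R} (hx : x ∈ A) (hy : y ∈ A) (h : y * x ∈ p) : x * y ∈ p := by
  simpa using hp.add_mem (hp.comm_mem hx hy) h

theorem IsPrimeIdealOf.isVConvex (hv : IsValuation v) {a : Set R}
    (ha : IsPrimeIdealOf (valRing v) a) (hsupp : valSupp v ⊆ a) (hsub : a ⊆ valIdeal v) :
    IsVConvex v a := by
  intro x hx y hxy
  obtain hx_top | hx_fin := eq_or_ne (v x) ⊤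
  · exact hsupp (top_le_iff.mp (hx_top ▸ hxy))
  obtain ⟨γ, hγ⟩ := WithTop.ne_top_iff_exists.mp hx_fin
  obtain ⟨z, hz⟩ := hv.surjective ((-γ : Γ) : WithTop Γ)
  have hzx : v (z * x) = 0 := by
    rw [hv.map_mul, hz, ← hγ, ← WithTop.coe_add, neg_add_cancel, WithTop.coe_zero]
  have hzx_mem : z * x ∈ valRing v := hzx.symm.le
  have hzx_not_mem : z * x ∉ a := fun h => (hsub h).ne' hzx
  have hy : y ∈ valRing v := (hsub hx).le.trans hxy
  have hyz : y * z ∈ valRing v := by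
    show 0 ≤ v (y * z)
    calc (0 : WithTop Γ) = v x + v z := by
          rw [hz, ← hγ, ← WithTop.coe_add, add_neg_cancel, WithTop.coe_zero]
      _ ≤ v y + v z := add_le_add_left hxy _
      _ = v (y * z) := (hv.map_mul y z).symm
  have hzxy : z * x * y ∈ a :=
    ha.mul_mem_of_mul_mem_swap hzx_mem hy (mul_assoc y z x ▸ ha.mul_mem_left hyz hx)
  exact (ha.mem_or_mem hzx_mem hy hzxy).resolve_left hzx_not_mem

end

theorem vconvex_prime_iff_between_supp_and_center_general {R : Type u} [Ring R]
    {Γ : Type*} [AddCommGroup Γ] [LinearOrder Γ] [IsOrderedAddMonoid Γ]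
    (v : R → WithTop Γ) (hv : IsValuation v) :
    ∀ a : Set R, IsPrimeIdealOf (valRing v) a →
      (IsVConvex v a ↔ valSupp v ⊆ a ∧ a ⊆ valIdeal v) := fun _ ha =>
  ⟨fun hconv => ⟨hconv.valSupp_subset hv ha.zero_mem,
      hconv.subset_valIdeal hv ha.subset ha.one_not_mem⟩,
    fun ⟨hsupp, hsub⟩ => ha.isVConvex hv hsupp hsub⟩

/-- The `v`-convex prime ideals of `A_v` are exactly the prime ideals `a` of `A_v`
with `supp v ⊆ a ⊆ 𝔭_v`. -/
theorem vconvex_prime_iff_between_supp_and_center {R : Type u} [Ring R] [Nontrivial R]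
    (𝒜 : ZMod 2 → AddSubgroup R) (hR : IsSuperring 𝒜)
    {Γ : Type*} [AddCommGroup Γ] [LinearOrder Γ] [IsOrderedAddMonoid Γ]
    (v : R → WithTop Γ) (hv : IsValuation v) :
    ∀ a : Set R, IsPrimeIdealOf (valRing v) a →
      (IsVConvex v a ↔ valSupp v ⊆ a ∧ a ⊆ valIdeal v) :=
  vconvex_prime_iff_between_supp_and_center_general v hv
end

section
/- Let v be a valuation on a superring R and let 𝔭, 𝔮 be prime ideals of A_v with supp(v) ⊆ 𝔭 ⊆ 𝔭_v and supp(v) ⊆ 𝔮 ⊆ 𝔭_v. Then 𝔭 ⊆ 𝔮 or 𝔮 ⊆ 𝔭. -/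
universe u

/- Even elements are central and odd ones anticommute, so a commutator `[a, b]` only sees the odd
parts `a₁, b₁` and squares to zero; hence `v [a, b] = ∞`. Given a prime `p` with
`supp v ⊆ p ⊆ 𝔭_v`, `x ∈ p` and `z ∈ A_v` with `v x ≤ v z`, pick `s` with `v s = -v x`: then
`(s x) z ≡ (s z) x ∈ p` modulo `supp v`, and `s x ∉ p` because `v (s x) = 0`, so `z ∈ p`. Thus each
such prime is upward closed for `v` inside `A_v`, and two upward closed sets are comparable. -/

namespace IsSuperring

variable {R : Type*} [Ring R] {𝒜 : ZMod 2 → AddSubgroup R}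

theorem mul_eq_neg_mul_of_odd (hR : IsSuperring 𝒜) {x y : R} (hx : x ∈ 𝒜 1) (hy : y ∈ 𝒜 1) :
    y * x = -(x * y) := by
  have h := hR.odd_sq _ ((𝒜 1).add_mem hx hy)
  rw [add_mul, mul_add, mul_add, hR.odd_sq x hx, hR.odd_sq y hy, zero_add, add_zero] at h
  exact eq_neg_of_add_eq_zero_right h

theorem mul_mul_self_eq_zero_of_odd (hR : IsSuperring 𝒜) {x y : R} (hx : x ∈ 𝒜 1)
    (hy : y ∈ 𝒜 1) : x * y * x = 0 := by
  rw [mul_assoc, hR.mul_eq_neg_mul_of_odd hx hy, mul_neg, ← mul_assoc, hR.odd_sq x hx, zero_mul,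
    neg_zero]

theorem commutator_eq_of_odd_parts (hR : IsSuperring 𝒜) {a₀ a₁ b₀ b₁ : R} (ha₀ : a₀ ∈ 𝒜 0)
    (hb₀ : b₀ ∈ 𝒜 0) :
    (a₀ + a₁) * (b₀ + b₁) - (b₀ + b₁) * (a₀ + a₁) = a₁ * b₁ - b₁ * a₁ := by
  have h₁ := hR.even_central a₀ ha₀ (b₀ + b₁)
  have h₂ := hR.even_central b₀ hb₀ a₁
  calc _ = a₀ * (b₀ + b₁) - (b₀ + b₁) * a₀ + (a₁ * b₀ - b₀ * a₁) + (a₁ * b₁ - b₁ * a₁) := by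
        noncomm_ring
    _ = a₁ * b₁ - b₁ * a₁ := by rw [h₁, h₂]; abel

theorem commutator_mul_self_eq_zero (hR : IsSuperring 𝒜) (a b : R) :
    (a * b - b * a) * (a * b - b * a) = 0 := by
  obtain ⟨a₀, ha₀, a₁, ha₁, rfl⟩ := hR.decompose a
  obtain ⟨b₀, hb₀, b₁, hb₁, rfl⟩ := hR.decompose b
  have hab := hR.mul_mul_self_eq_zero_of_odd ha₁ hb₁
  have hba := hR.mul_mul_self_eq_zero_of_odd hb₁ ha₁
  have ha := hR.odd_sq a₁ ha₁
  have hb := hR.odd_sq b₁ hb₁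
  calc _ = a₁ * b₁ * a₁ * b₁ - a₁ * (b₁ * b₁) * a₁ - b₁ * (a₁ * a₁) * b₁ + b₁ * a₁ * b₁ * a₁ := by
        rw [hR.commutator_eq_of_odd_parts ha₀ hb₀]; noncomm_ring
    _ = 0 := by rw [hab, hba, ha, hb]; simp

end IsSuperring

namespace IsValuation

variable {R : Type*} [Ring R] {Γ : Type*} [AddCommGroup Γ] [LinearOrder Γ] [IsOrderedAddMonoid Γ]
  {v : R → WithTop Γ}

theorem eq_top_of_mul_self_eq_zero (hv : IsValuation v) {c : R} (hc : c * c = 0) : v c = ⊤ := by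
  have h : v c + v c = ⊤ := by rw [← hv.map_mul, hc, hv.map_zero]
  exact (WithTop.add_eq_top.mp h).elim id id

theorem exists_mul_eq_zero (hv : IsValuation v) {x : R} (hx : v x ≠ ⊤) : ∃ s, v (s * x) = 0 := by
  obtain ⟨γ, hγ⟩ := WithTop.ne_top_iff_exists.mp hx
  obtain ⟨s, hs⟩ := hv.surjective ((-γ : Γ) : WithTop Γ)
  refine ⟨s, ?_⟩
  rw [hv.map_mul, hs, ← hγ, ← WithTop.coe_add, neg_add_cancel, WithTop.coe_zero]

theorem mul_nonneg_of_mul_eq_zero_of_le (hv : IsValuation v) {s x z : R} (hsx : v (s * x) = 0)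
    (hle : v x ≤ v z) : 0 ≤ v (s * z) := by
  rw [← hsx, hv.map_mul, hv.map_mul]
  exact add_le_add_right hle _

end IsValuation

namespace IsPrimeIdealOf

variable {R : Type*} [Ring R] {Γ : Type*} [AddCommGroup Γ] [LinearOrder Γ] [IsOrderedAddMonoid Γ]
  {v : R → WithTop Γ} {p : Set R}

theorem mem_of_le (hv : IsValuation v) (hcomm : ∀ a b : R, v (a * b - b * a) = ⊤)
    (hp : IsPrimeIdealOf (valRing v) p) (hp₁ : valSupp v ⊆ p) (hp₂ : p ⊆ valIdeal v) {x z : R}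
    (hx : x ∈ p) (hz : z ∈ valRing v) (hle : v x ≤ v z) : z ∈ p := by
  by_cases hx_top : v x = ⊤
  · exact hp₁ (top_le_iff.mp (hx_top ▸ hle))
  obtain ⟨s, hsx⟩ := hv.exists_mul_eq_zero hx_top
  have hszx : s * z * x ∈ p := hp.mul_mem_left (hv.mul_nonneg_of_mul_eq_zero_of_le hsx hle) hx
  have hcomm_mem : s * (z * x - x * z) ∈ p := by
    apply hp₁
    change v _ = ⊤
    rw [hv.map_mul, hcomm, WithTop.add_top]
  have hsxz : s * x * z ∈ p := by
    have h : s * x * z = s * z * x + -(s * (z * x - x * z)) := by noncomm_ring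
    exact h ▸ hp.add_mem hszx (hp.neg_mem hcomm_mem)
  refine (hp.mem_or_mem hsx.ge hz hsxz).resolve_left fun hsx_mem => ?_
  exact (hp₂ hsx_mem).ne' hsx

theorem subset_or_subset (hv : IsValuation v) (hcomm : ∀ a b : R, v (a * b - b * a) = ⊤)
    {q : Set R} (hp : IsPrimeIdealOf (valRing v) p) (hq : IsPrimeIdealOf (valRing v) q)
    (hp₁ : valSupp v ⊆ p) (hp₂ : p ⊆ valIdeal v) (hq₁ : valSupp v ⊆ q) (hq₂ : q ⊆ valIdeal v) :
    p ⊆ q ∨ q ⊆ p := by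
  refine or_iff_not_imp_left.mpr fun hpq y hy => ?_
  obtain ⟨x, hxp, hxq⟩ := Set.not_subset.mp hpq
  rcases le_total (v x) (v y) with hle | hle
  · exact hp.mem_of_le hv hcomm hp₁ hp₂ hxp (hq.subset hy) hle
  · exact absurd (hq.mem_of_le hv hcomm hq₁ hq₂ hy (hp.subset hxp) hle) hxq

end IsPrimeIdealOf

theorem primes_between_supp_and_center_comparable_general {R : Type u} [Ring R]
    (𝒜 : ZMod 2 → AddSubgroup R) (hR : IsSuperring 𝒜)
    {Γ : Type*} [AddCommGroup Γ] [LinearOrder Γ] [IsOrderedAddMonoid Γ]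
    (v : R → WithTop Γ) (hv : IsValuation v)
    (p q : Set R) (hp : IsPrimeIdealOf (valRing v) p) (hq : IsPrimeIdealOf (valRing v) q)
    (hp1 : valSupp v ⊆ p) (hp2 : p ⊆ valIdeal v)
    (hq1 : valSupp v ⊆ q) (hq2 : q ⊆ valIdeal v) :
    p ⊆ q ∨ q ⊆ p :=
  hp.subset_or_subset hv (fun a b => hv.eq_top_of_mul_self_eq_zero
    (hR.commutator_mul_self_eq_zero a b)) hq hp1 hp2 hq1 hq2

/-- Prime ideals of `A_v` lying between `supp v` and `𝔭_v` are comparable. -/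
theorem primes_between_supp_and_center_comparable {R : Type u} [Ring R] [Nontrivial R]
    (𝒜 : ZMod 2 → AddSubgroup R) (hR : IsSuperring 𝒜)
    {Γ : Type*} [AddCommGroup Γ] [LinearOrder Γ] [IsOrderedAddMonoid Γ]
    (v : R → WithTop Γ) (hv : IsValuation v)
    (p q : Set R) (hp : IsPrimeIdealOf (valRing v) p) (hq : IsPrimeIdealOf (valRing v) q)
    (hp1 : valSupp v ⊆ p) (hp2 : p ⊆ valIdeal v)
    (hq1 : valSupp v ⊆ q) (hq2 : q ⊆ valIdeal v) :
    p ⊆ q ∨ q ⊆ p :=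
  primes_between_supp_and_center_comparable_general 𝒜 hR v hv p q hp hq hp1 hp2 hq1 hq2
end

section
/- Let v and w be valuations on a superring R, with value groups Γ_v and Γ_w. Then w dominates v (i.e., there exists an order-preserving group homomorphism h : Γ_v → Γ_w, extended by h(∞) = ∞, with w = h ∘ v) if and only if supp(w) = supp(v), 𝔭_w ⊆ 𝔭_v, and A_v ⊆ A_w. -/
universe u

/-!
Only the converse needs an idea. The three conditions give `v a = 0 → w a = 0`. Rescaling
by an element `z` with `v z = -v x` (surjectivity of `v`) turns `v x ≤ v y` into
`v (z x) = 0 ≤ v (z y)`, hence `w (z x) = 0 ≤ w (z y)`, and cancelling the finite value `w z`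
gives `w x ≤ w y`. Thus `w` factors through `v`, and the factor, read off on a section of `v`,
is the required monotone homomorphism.
-/

theorem WithTop.map_addMonoidHom_zero {α β : Type*} [AddZeroClass α] [AddZeroClass β]
    (h : α →+ β) : WithTop.map h 0 = 0 := by
  rw [WithTop.map_zero, map_zero, WithTop.coe_zero]

section Dominance

variable {R : Type*} [Ring R]
  {Γ : Type*} [AddCommGroup Γ] [LinearOrder Γ] [IsOrderedAddMonoid Γ]
  {Δ : Type*} [AddCommGroup Δ] [LinearOrder Δ] [IsOrderedAddMonoid Δ]
  {v : R → WithTop Γ} {w : R → WithTop Δ}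

theorem valSupp_eq_of_eq_map {h : Γ →+ Δ} (hvw : ∀ x, w x = WithTop.map h (v x)) :
    valSupp w = valSupp v := by
  ext x
  simp only [valSupp, Set.mem_ofPred_eq, hvw x, WithTop.map_eq_top_iff]

theorem valIdeal_subset_of_eq_map {h : Γ →+ Δ} (hh : Monotone h)
    (hvw : ∀ x, w x = WithTop.map h (v x)) : valIdeal w ⊆ valIdeal v := by
  intro x hx
  simp only [valIdeal, Set.mem_ofPred_eq, hvw x] at hx ⊢
  contrapose! hx
  simpa only [WithTop.map_addMonoidHom_zero] using hh.withTop_map hx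

theorem valRing_subset_of_eq_map {h : Γ →+ Δ} (hh : Monotone h)
    (hvw : ∀ x, w x = WithTop.map h (v x)) : valRing v ⊆ valRing w := by
  intro x hx
  simp only [valRing, Set.mem_ofPred_eq, hvw x] at hx ⊢
  simpa only [WithTop.map_addMonoidHom_zero] using hh.withTop_map hx

theorem eq_zero_of_eq_zero_of_subset (hideal : valIdeal w ⊆ valIdeal v)
    (hring : valRing v ⊆ valRing w) {a : R} (ha : v a = 0) : w a = 0 := by
  refine le_antisymm (not_lt.mp fun hpos => ?_) (hring ha.ge)
  exact (hideal hpos).ne' ha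

theorem le_of_le_of_subset (hv : IsValuation v) (hw : IsValuation w)
    (hsupp : valSupp v ⊆ valSupp w) (hideal : valIdeal w ⊆ valIdeal v)
    (hring : valRing v ⊆ valRing w) {x y : R} (hxy : v x ≤ v y) : w x ≤ w y := by
  by_cases hx : v x = ⊤
  · have hy : y ∈ valSupp w := hsupp (top_le_iff.mp (hx ▸ hxy))
    exact hy.symm ▸ le_top
  obtain ⟨γ, hγ⟩ := WithTop.ne_top_iff_exists.mp hx
  obtain ⟨z, hz⟩ := hv.surjective ((-γ : Γ) : WithTop Γ)
  have hzx : w z + w x = 0 := by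
    rw [← hw.map_mul]
    apply eq_zero_of_eq_zero_of_subset hideal hring
    rw [hv.map_mul, hz, ← hγ, ← WithTop.coe_add, neg_add_cancel, WithTop.coe_zero]
  have hzy : 0 ≤ w z + w y := by
    rw [← hw.map_mul]
    apply hring
    calc (0 : WithTop Γ) = v z + v x := by
          rw [hz, ← hγ, ← WithTop.coe_add, neg_add_cancel, WithTop.coe_zero]
      _ ≤ v (z * y) := hv.map_mul z y ▸ add_le_add_right hxy _
  have hwz : w z ≠ ⊤ := fun htop => by simp [htop] at hzx
  exact (WithTop.add_le_add_iff_left hwz).mp (hzx ▸ hzy)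

theorem exists_monotone_eq_map_of_le_imp_le (hv : IsValuation v) (hw : IsValuation w)
    (hsupp : valSupp w = valSupp v) (hle : ∀ x y, v x ≤ v y → w x ≤ w y) :
    ∃ h : Γ →+ Δ, Monotone h ∧ ∀ x, w x = WithTop.map h (v x) := by
  choose sec hsec using fun γ : Γ => hv.surjective γ
  have hfin : ∀ γ, w (sec γ) ≠ ⊤ := fun γ htop =>
    WithTop.coe_ne_top ((hsec γ).symm.trans (hsupp.subset htop))
  choose f hf using fun γ => WithTop.ne_top_iff_exists.mp (hfin γ)
  have hwf : ∀ x, w x = WithTop.map f (v x) := by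
    intro x
    cases hγ : v x with
    | top =>
      rw [WithTop.map_top]
      exact hsupp.symm.subset hγ
    | coe γ =>
      rw [WithTop.map_coe, hf]
      exact le_antisymm (hle _ _ (by rw [hγ, hsec])) (hle _ _ (by rw [hγ, hsec]))
  have hf_add : ∀ γ δ, f (γ + δ) = f γ + f δ := by
    intro γ δ
    have hvw := hwf (sec γ * sec δ)
    rw [hw.map_mul, hv.map_mul, hsec, hsec, ← hf, ← hf, ← WithTop.coe_add, ← WithTop.coe_add,
      WithTop.map_coe] at hvw
    exact (WithTop.coe_injective hvw).symm
  refine ⟨AddMonoidHom.mk' f hf_add, fun γ δ hγδ => ?_, hwf⟩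
  have : w (sec γ) ≤ w (sec δ) := hle _ _ (by rw [hsec, hsec]; exact WithTop.coe_le_coe.mpr hγδ)
  rwa [← hf, ← hf, WithTop.coe_le_coe] at this

end Dominance

theorem dominates_iff_general {R : Type u} [Ring R]
    {Γ : Type*} [AddCommGroup Γ] [LinearOrder Γ] [IsOrderedAddMonoid Γ] {Δ : Type*} [AddCommGroup Δ] [LinearOrder Δ] [IsOrderedAddMonoid Δ]
    (v : R → WithTop Γ) (hv : IsValuation v)
    (w : R → WithTop Δ) (hw : IsValuation w) :
    (∃ h : Γ →+ Δ, Monotone ⇑h ∧ ∀ x : R, w x = WithTop.map (⇑h) (v x)) ↔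
      (valSupp w = valSupp v ∧ valIdeal w ⊆ valIdeal v ∧ valRing v ⊆ valRing w) := by
  constructor
  · rintro ⟨h, hh, hvw⟩
    exact ⟨valSupp_eq_of_eq_map hvw, valIdeal_subset_of_eq_map hh hvw,
      valRing_subset_of_eq_map hh hvw⟩
  · rintro ⟨hsupp, hideal, hring⟩
    exact exists_monotone_eq_map_of_le_imp_le hv hw hsupp
      fun x y => le_of_le_of_subset hv hw hsupp.ge hideal hring

/-- `w` dominates `v` (i.e. `w = h ∘ v` for an order-preserving homomorphism `h`
of the value groups) iff `supp w = supp v`, `𝔭_w ⊆ 𝔭_v` and `A_v ⊆ A_w`. -/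
theorem dominates_iff {R : Type u} [Ring R] [Nontrivial R]
    (𝒜 : ZMod 2 → AddSubgroup R) (hR : IsSuperring 𝒜)
    {Γ : Type*} [AddCommGroup Γ] [LinearOrder Γ] [IsOrderedAddMonoid Γ] {Δ : Type*} [AddCommGroup Δ] [LinearOrder Δ] [IsOrderedAddMonoid Δ]
    (v : R → WithTop Γ) (hv : IsValuation v)
    (w : R → WithTop Δ) (hw : IsValuation w) :
    (∃ h : Γ →+ Δ, Monotone ⇑h ∧ ∀ x : R, w x = WithTop.map (⇑h) (v x)) ↔
      (valSupp w = valSupp v ∧ valIdeal w ⊆ valIdeal v ∧ valRing v ⊆ valRing w) :=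
  dominates_iff_general v hv w hw
end

section
/- Let v be a valuation on a superring R. Then supp(v) is disjoint from A_v ∖ 𝔭_v, and supp(v) is the unique maximal element, under inclusion, among the two-sided ideals of R disjoint from A_v ∖ 𝔭_v; that is, every two-sided ideal I of R with I ∩ (A_v ∖ 𝔭_v) = ∅ satisfies I ⊆ supp(v). -/
universe u

/-- A two-sided ideal of a (possibly noncommutative) ring, as a set. -/
structure IsTwoSidedIdealSet {R : Type*} [Ring R] (I : Set R) : Prop where
  zero_mem : (0 : R) ∈ I
  add_mem : ∀ {x y : R}, x ∈ I → y ∈ I → x + y ∈ I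
  neg_mem : ∀ {x : R}, x ∈ I → -x ∈ I
  mul_mem_left : ∀ (a : R) {x : R}, x ∈ I → a * x ∈ I
  mul_mem_right : ∀ {x : R} (a : R), x ∈ I → x * a ∈ I

section Valuation

variable {R : Type*} [Ring R] {Γ : Type*} [AddCommGroup Γ] [LinearOrder Γ] [IsOrderedAddMonoid Γ]
  {v : R → WithTop Γ}

theorem mem_valRing_sdiff_valIdeal_iff {x : R} :
    x ∈ valRing v \ valIdeal v ↔ v x = 0 := by
  simp only [valRing, valIdeal, Set.mem_sdiff, Set.mem_ofPred_eq, not_lt]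
  exact ⟨fun h => le_antisymm h.2 h.1, fun h => ⟨h.ge, h.le⟩⟩

theorem valSupp_inter_valRing_sdiff_valIdeal :
    valSupp v ∩ (valRing v \ valIdeal v) = ∅ := by
  refine Set.eq_empty_of_forall_notMem fun x ⟨hsupp, hunit⟩ => ?_
  rw [mem_valRing_sdiff_valIdeal_iff] at hunit
  exact WithTop.top_ne_zero (hsupp.symm.trans hunit)

/-- Surjectivity of `v` supplies an element of value `-v x`. -/
theorem IsValuation.exists_map_mul_eq_zero (hv : IsValuation v) {x : R} (hx : x ∉ valSupp v) :
    ∃ y, v (x * y) = 0 := by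
  obtain ⟨γ, hγ⟩ := WithTop.ne_top_iff_exists.mp hx
  obtain ⟨y, hy⟩ := hv.surjective ((-γ : Γ) : WithTop Γ)
  refine ⟨y, ?_⟩
  rw [hv.map_mul, ← hγ, hy, ← WithTop.coe_add, add_neg_cancel, WithTop.coe_zero]

theorem IsValuation.subset_valSupp_of_inter_eq_empty (hv : IsValuation v) {I : Set R}
    (hI : ∀ x ∈ I, ∀ a, x * a ∈ I) (hdisj : I ∩ (valRing v \ valIdeal v) = ∅) :
    I ⊆ valSupp v := by
  intro x hx
  by_contra hsupp
  obtain ⟨y, hy⟩ := hv.exists_map_mul_eq_zero hsupp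
  have hxy : x * y ∈ I ∩ (valRing v \ valIdeal v) :=
    ⟨hI x hx y, mem_valRing_sdiff_valIdeal_iff.mpr hy⟩
  rw [hdisj] at hxy
  exact hxy

end Valuation

theorem supp_maximal_ideal_avoiding_general {R : Type u} [Ring R]
    {Γ : Type*} [AddCommGroup Γ] [LinearOrder Γ] [IsOrderedAddMonoid Γ]
    (v : R → WithTop Γ) (hv : IsValuation v) :
    valSupp v ∩ (valRing v \ valIdeal v) = ∅ ∧
      ∀ I : Set R, IsTwoSidedIdealSet I → I ∩ (valRing v \ valIdeal v) = ∅ →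
        I ⊆ valSupp v :=
  ⟨valSupp_inter_valRing_sdiff_valIdeal,
    fun _ hI hdisj => hv.subset_valSupp_of_inter_eq_empty (fun _ hx a => hI.mul_mem_right a hx) hdisj⟩

/-- `supp v` is disjoint from `A_v ∖ 𝔭_v` and is the unique maximal such two-sided
ideal: every two-sided ideal of `R` disjoint from `A_v ∖ 𝔭_v` lies in `supp v`. -/
theorem supp_maximal_ideal_avoiding {R : Type u} [Ring R] [Nontrivial R]
    (𝒜 : ZMod 2 → AddSubgroup R) (hR : IsSuperring 𝒜)
    {Γ : Type*} [AddCommGroup Γ] [LinearOrder Γ] [IsOrderedAddMonoid Γ]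
    (v : R → WithTop Γ) (hv : IsValuation v) :
    valSupp v ∩ (valRing v \ valIdeal v) = ∅ ∧
      ∀ I : Set R, IsTwoSidedIdealSet I → I ∩ (valRing v \ valIdeal v) = ∅ →
        I ⊆ valSupp v :=
  supp_maximal_ideal_avoiding_general v hv
end

section
/- Let (A, 𝔭) be a valuation pair of a superring R. Then A is integrally closed in R: R₁ ⊆ A, and every even element x ∈ R₀ satisfying a monic polynomial equation x^n + a_{n-1}x^{n-1} + ⋯ + a_1 x + a_0 = 0 with coefficients a_0, …, a_{n-1} ∈ A belongs to A. -/
universe u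

lemma IsSubringSet.pow_mem {R : Type*} [Ring R] {A : Set R} (hA : IsSubringSet A)
    {x : R} (hx : x ∈ A) : ∀ n : ℕ, x ^ n ∈ A := by
  intro n
  induction n with
  | zero => simpa using hA.one_mem
  | succ k ih => rw [pow_succ]; exact hA.mul_mem ih hx

lemma IsPrimeIdealOf.mem_of_pow_mem {R : Type*} [Ring R] {A p : Set R}
    (hA : IsSubringSet A) (hp : IsPrimeIdealOf A p) {x : R} (hx : x ∈ A) :
    ∀ n : ℕ, 0 < n → x ^ n ∈ p → x ∈ p := by
  intro n
  induction n with
  | zero => omega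
  | succ k ih =>
    intro _ hpow
    rw [pow_succ] at hpow
    rcases hp.mem_or_mem (hA.pow_mem hx k) hx hpow with hk | hk
    · rcases Nat.eq_zero_or_pos k with rfl | hk0
      · simp at hk; exact absurd hk hp.one_not_mem
      · exact ih hk0 hk
    · exact hk

/-- If `(A, p)` is a valuation pair of a superring `R`, then `A` is integrally
closed in `R`: `R₁ ⊆ A`, and every even `x` satisfying a monic polynomial
equation with coefficients in `A` belongs to `A`. -/
theorem valuationPair_integrallyClosed {R : Type u} [Ring R] [Nontrivial R]
    (𝒜 : ZMod 2 → AddSubgroup R) (hR : IsSuperring 𝒜)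
    (A p : Set R) (h : IsValuationPair 𝒜 A p) :
    (∀ x ∈ 𝒜 1, x ∈ A) ∧
      ∀ x ∈ 𝒜 0, ∀ n : ℕ, 0 < n → ∀ a : ℕ → R, (∀ i < n, a i ∈ A) →
        x ^ n + ∑ i ∈ Finset.range n, a i * x ^ i = 0 → x ∈ A := by
  constructor
  · -- R₁ ⊆ A
    intro x hx1
    by_contra hxA
    obtain ⟨x', hx'p, hx'0, hmemA, hnp⟩ := h.pair x hxA
    apply hnp
    apply h.canonical_subset
    have : x * x' = x' * x := (hR.even_central x' hx'0 x).symm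
    rw [this]
    exact AddSubgroup.subset_closure ⟨x', x, hx1, rfl⟩
  · intro x hx0 n hn a ha heq
    by_contra hxA
    obtain ⟨x', hx'p, hx'0, htA, htnp⟩ := h.pair x hxA
    set t := x * x' with ht
    have hx'A : x' ∈ A := h.prime.subset hx'p
    have hcomm : Commute x x' := hR.even_central x hx0 x'
    -- key : x^i * x'^n = t^i * x'^(n-i) for i ≤ n
    have key : ∀ i, i ≤ n → x ^ i * x' ^ n = t ^ i * x' ^ (n - i) := by
      intro i hi
      rw [ht, hcomm.mul_pow, mul_assoc, ← pow_add]
      congr 2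
      omega
    -- t^n ∈ p
    have htn : t ^ n ∈ p := by
      have h1 : x ^ n = -∑ i ∈ Finset.range n, a i * x ^ i :=
        eq_neg_of_add_eq_zero_left heq
      have h2 : t ^ n = -∑ i ∈ Finset.range n, a i * (t ^ i * x' ^ (n - i)) := by
        have := key n le_rfl
        simp only [Nat.sub_self, pow_zero, mul_one] at this
        rw [← this, h1, neg_mul, Finset.sum_mul]
        congr 1
        refine Finset.sum_congr rfl fun i hi => ?_
        rw [mul_assoc, key i (le_of_lt (Finset.mem_range.mp hi))]
      rw [h2]
      apply h.prime.neg_mem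
      refine Finset.sum_induction _ (· ∈ p) (fun a b => h.prime.add_mem) h.prime.zero_mem ?_
      intro i hi
      refine h.prime.mul_mem_left (ha i (Finset.mem_range.mp hi)) ?_
      refine h.prime.mul_mem_left (h.subring.pow_mem htA i) ?_
      have : 0 < n - i := by
        have := Finset.mem_range.mp hi; omega
      obtain ⟨k, hk⟩ : ∃ k, n - i = k + 1 := ⟨n - i - 1, by omega⟩
      rw [hk, pow_succ]
      exact h.prime.mul_mem_left (h.subring.pow_mem hx'A k) hx'p
    exact htnp (h.prime.mem_of_pow_mem h.subring htA n hn htn)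
end

section
/- Let v and w be valuations on a superring R with 𝔭_v ⊆ 𝔭_w. Then the set Λ = {v, w} has the inverse property (i.e., for every x ∈ R there exists x' ∈ R such that v(x) ≠ ∞ implies v(x·x') = 0 and w(x) ≠ ∞ implies w(x·x') = 0) if and only if A_w ⊆ A_v ∪ supp(w). -/
universe u

/-! A valuation is surjective, so whenever `v x ≠ ∞` some `x'` has `v x' = -v x`, i.e. `v (x x') = 0`;
the content is whether one `x'` can serve both valuations. If `w x ≥ 0` but `v x < 0`, an `x'` with
`v (x x') = 0` has `v x' > 0`, hence `w x' > 0` by `𝔭_v ⊆ 𝔭_w`, so `w (x x') > 0`. Conversely, if `w (x x') = 0`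
then `x x' ∈ A_w \ supp w ⊆ A_v`, and `v (x x') > 0` would force `w (x x') > 0`; so `v (x x') = 0` too. -/

section

variable {R : Type*} [Ring R]
  {Γ : Type*} [AddCommGroup Γ] [LinearOrder Γ] [IsOrderedAddMonoid Γ]
  {Δ : Type*} [AddCommGroup Δ] [LinearOrder Δ] [IsOrderedAddMonoid Δ]
  {v : R → WithTop Γ} {w : R → WithTop Δ}

theorem IsValuation.exists_apply_mul_eq_zero (hv : IsValuation v) {x : R} (hx : v x ≠ ⊤) :
    ∃ x' : R, v (x * x') = 0 := by
  lift v x to Γ using hx with γ hγ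
  obtain ⟨x', hx'⟩ := hv.surjective ↑(-γ)
  exact ⟨x', by rw [hv.map_mul, ← hγ, hx', ← WithTop.coe_add, add_neg_cancel, WithTop.coe_zero]⟩

theorem nonneg_of_apply_mul_eq_zero (hv : IsValuation v) (hw : IsValuation w)
    (hpp : valIdeal v ⊆ valIdeal w) {x x' : R} (hx : 0 ≤ w x)
    (hvx : v (x * x') = 0) (hwx : w (x * x') = 0) : 0 ≤ v x := by
  by_contra! hneg
  have hvx' : 0 < v x' := by
    by_contra! hle
    exact (add_neg_of_neg_of_nonpos hneg hle).ne (hv.map_mul x x' ▸ hvx)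
  have hwx' : 0 < w (x * x') := by
    rw [hw.map_mul]
    exact hpp hvx' |>.trans_le (le_add_of_nonneg_left hx)
  exact hwx'.ne' hwx

theorem apply_eq_zero_of_apply_eq_zero (hpp : valIdeal v ⊆ valIdeal w)
    (hsub : valRing w ⊆ valRing v ∪ valSupp w) {y : R} (hy : w y = 0) : v y = 0 := by
  have hy_nonneg : 0 ≤ v y := by
    rcases hsub (show 0 ≤ w y from hy.ge) with h | h
    · exact h
    · exact absurd (hy.symm.trans h) WithTop.zero_ne_top
  refine hy_nonneg.eq_or_lt.elim Eq.symm fun hpos => ?_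
  exact absurd hy (hpp hpos).ne'

end

theorem inverse_property_iff_general {R : Type u} [Ring R]
    {Γ : Type*} [AddCommGroup Γ] [LinearOrder Γ] [IsOrderedAddMonoid Γ] {Δ : Type*} [AddCommGroup Δ] [LinearOrder Δ] [IsOrderedAddMonoid Δ]
    (v : R → WithTop Γ) (hv : IsValuation v)
    (w : R → WithTop Δ) (hw : IsValuation w)
    (hpp : valIdeal v ⊆ valIdeal w) :
    (∀ x : R, ∃ x' : R, (v x ≠ ⊤ → v (x * x') = 0) ∧ (w x ≠ ⊤ → w (x * x') = 0)) ↔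
      valRing w ⊆ valRing v ∪ valSupp w := by
  constructor
  · intro hinv x hx
    by_cases hwx : w x = ⊤
    · exact Or.inr hwx
    by_cases hvx : v x = ⊤
    · exact Or.inl (show 0 ≤ v x from hvx ▸ le_top)
    obtain ⟨x', hvx', hwx'⟩ := hinv x
    exact Or.inl (nonneg_of_apply_mul_eq_zero hv hw hpp hx (hvx' hvx) (hwx' hwx))
  · intro hsub x
    by_cases hwx : w x = ⊤
    · by_cases hvx : v x = ⊤
      · exact ⟨1, fun h => (h hvx).elim, fun h => (h hwx).elim⟩
      obtain ⟨x', hx'⟩ := hv.exists_apply_mul_eq_zero hvx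
      exact ⟨x', fun _ => hx', fun h => (h hwx).elim⟩
    obtain ⟨x', hx'⟩ := hw.exists_apply_mul_eq_zero hwx
    exact ⟨x', fun _ => apply_eq_zero_of_apply_eq_zero hpp hsub hx', fun _ => hx'⟩

/-- For valuations `v, w` on a superring `R` with `𝔭_v ⊆ 𝔭_w`, the set `{v, w}`
has the inverse property iff `A_w ⊆ A_v ∪ supp w`. -/
theorem inverse_property_iff {R : Type u} [Ring R] [Nontrivial R]
    (𝒜 : ZMod 2 → AddSubgroup R) (hR : IsSuperring 𝒜)
    {Γ : Type*} [AddCommGroup Γ] [LinearOrder Γ] [IsOrderedAddMonoid Γ] {Δ : Type*} [AddCommGroup Δ] [LinearOrder Δ] [IsOrderedAddMonoid Δ]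
    (v : R → WithTop Γ) (hv : IsValuation v)
    (w : R → WithTop Δ) (hw : IsValuation w)
    (hpp : valIdeal v ⊆ valIdeal w) :
    (∀ x : R, ∃ x' : R, (v x ≠ ⊤ → v (x * x') = 0) ∧ (w x ≠ ⊤ → w (x * x') = 0)) ↔
      valRing w ⊆ valRing v ∪ valSupp w :=
  inverse_property_iff_general v hv w hw hpp
end
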